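/- (Appendix Lemma: convergence of the generator at the mode-hopping point.) Let Φ denote the standard normal cumulative distribution function. Let p ∈ [0, 1], ℓ₀ > 0 and r₁, r₂ > 0, and set α₊ = 2Φ(-ℓ₀/(2√r₁)), α₋ = 2Φ(-ℓ₀/(2√r₂)), s₊ = α₊^{-1/2}, s₋ = α₋^{-1/2}. Let f : ℝ → ℝ and suppose there exist real numbers A₊, A₋ and C such that f(x) = f(0) + A₊ x + (C/2) x² + o(x²) as x → 0⁺ and f(x) = f(0) + A₋ x + (C/2) x² + o(x²) as x → 0⁻ (i.e. f has one-sided first derivatives A₊, A₋ at 0 and common one-sided second derivative C at 0), and suppose the skew matching condition p · α₊^{1/2} · A₊ = (1-p) · α₋^{1/2} · A₋ holds. Then lim_{d → ∞} d · [ p α₊ ( f(s₊ d^{-1/2}) - f(0) ) + (1-p) α₋ ( f(-s₋ d^{-1/2}) - f(0) ) ] = C/2. -/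

import Mathlib

open MeasureTheory Asymptotics Filter

/-- The standard normal cumulative distribution function
`Φ(t) = ∫_{-∞}^t (2π)^{-1/2} e^{-u²/2} du`. -/
noncomputable def stdNormCDF (t : ℝ) : ℝ :=
  ∫ u in Set.Iic t, (2 * Real.pi) ^ (-(1 : ℝ) / 2) * Real.exp (-u ^ 2 / 2)

/-! Put `ε = d^{-1/2}`, so that the quantity is `ε⁻²` times the weighted increments
`p α₊ (f(s₊ε) - f(0)) + (1-p) α₋ (f(-s₋ε) - f(0))`. Expanding `f` to second order on each side,
the first-order terms `ε (p α₊ s₊ A₊ - (1-p) α₋ s₋ A₋)` vanish by the skew matching condition,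
since `α s = α^{1/2}`; the second-order terms give `(p α₊ s₊² + (1-p) α₋ s₋²) C/2 = C/2`, since
`α s² = 1`; and the remainders are `o(ε²)` because `ε ↦ ±sε` maps `0⁺` to the matching side. -/

open Topology

lemma stdNormCDF_pos (t : ℝ) : 0 < stdNormCDF t := by
  have hdensity_pos : ∀ u : ℝ, 0 < (2 * Real.pi) ^ (-(1 : ℝ) / 2) * Real.exp (-u ^ 2 / 2) :=
    fun u => by positivity
  have hint : Integrable fun u : ℝ => (2 * Real.pi) ^ (-(1 : ℝ) / 2) * Real.exp (-u ^ 2 / 2) := by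
    simpa [neg_div, div_eq_inv_mul] using
      (integrable_exp_neg_mul_sq (b := (1 / 2 : ℝ)) (by norm_num)).const_mul
        ((2 * Real.pi) ^ (-(1 : ℝ) / 2))
  rw [stdNormCDF, setIntegral_pos_iff_support_of_nonneg_ae
    (.of_forall fun u => (hdensity_pos u).le) hint.integrableOn,
    Function.support_eq_univ fun u => (hdensity_pos u).ne', Set.univ_inter]
  simp

lemma Real.mul_rpow_neg_half_sq {a : ℝ} (ha : 0 < a) : a * (a ^ (-(1 : ℝ) / 2)) ^ 2 = 1 := by
  rw [← Real.rpow_mul_natCast ha.le]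
  norm_num [Real.rpow_neg_one, ha.ne']

lemma Real.mul_rpow_neg_half {a : ℝ} (ha : 0 < a) : a * a ^ (-(1 : ℝ) / 2) = a ^ ((1 : ℝ) / 2) := by
  rw [← Real.rpow_one_add' ha.le (by norm_num)]
  norm_num

lemma Real.inv_sq_rpow_neg_half {x : ℝ} (hx : 0 ≤ x) : ((x ^ (-(1 : ℝ) / 2)) ^ 2)⁻¹ = x := by
  rw [← Real.rpow_mul_natCast hx]
  norm_num [Real.rpow_neg_one]

lemma tendsto_mul_left_nhdsGT_zero {c : ℝ} (hc : 0 < c) :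
    Tendsto (c * ·) (𝓝[>] 0) (𝓝[>] 0) := by
  simpa only [comap_mulLeft_nhdsGT_zero hc] using tendsto_comap (f := (c * ·)) (x := 𝓝[>] 0)

lemma tendsto_neg_mul_left_nhdsGT_zero {c : ℝ} (hc : 0 < c) :
    Tendsto (fun ε => -(c * ε)) (𝓝[>] 0) (𝓝[<] 0) := by
  have hneg : Tendsto Neg.neg (𝓝[>] (0 : ℝ)) (𝓝[<] 0) := by
    simpa using tendsto_neg_nhdsGT_neg (a := (0 : ℝ))
  exact hneg.comp (tendsto_mul_left_nhdsGT_zero hc)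

lemma tendsto_natCast_rpow_neg_half_nhdsGT_zero :
    Tendsto (fun d : ℕ => (d : ℝ) ^ (-(1 : ℝ) / 2)) atTop (𝓝[>] 0) := by
  refine tendsto_nhdsWithin_iff.2 ⟨?_, ?_⟩
  · simpa [neg_div, Function.comp_def] using
      (tendsto_rpow_neg_atTop (y := 1 / 2) (by norm_num)).comp tendsto_natCast_atTop_atTop
  · filter_upwards [eventually_gt_atTop 0] with d hd
    exact Real.rpow_pos_of_pos (Nat.cast_pos.2 hd) _

lemma Asymptotics.IsLittleO.comp_pow_of_isBigO {α 𝕜 E : Type*} [NormedDivisionRing 𝕜] [Norm E]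
    {u : 𝕜 → E} {g k : α → 𝕜} {l : Filter α} {l' : Filter 𝕜} {n : ℕ}
    (hu : u =o[l'] fun x => x ^ n) (hg : Tendsto g l l') (hgk : g =O[l] k) :
    (fun a => u (g a)) =o[l] fun a => k a ^ n :=
  (hu.comp_tendsto hg).trans_isBigO (hgk.pow n)

theorem tendsto_inv_sq_mul_two_sided_increments {f : ℝ → ℝ} {Ap Am C wp wm sp sm : ℝ}
    (hsp : 0 < sp) (hsm : 0 < sm)
    (hf_plus : (fun x => f x - (f 0 + Ap * x + C / 2 * x ^ 2)) =o[𝓝[>] 0] fun x => x ^ 2)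
    (hf_minus : (fun x => f x - (f 0 + Am * x + C / 2 * x ^ 2)) =o[𝓝[<] 0] fun x => x ^ 2)
    (hmatch : wp * sp * Ap = wm * sm * Am) :
    Tendsto (fun ε => (ε ^ 2)⁻¹ * (wp * (f (sp * ε) - f 0) + wm * (f (-(sm * ε)) - f 0)))
      (𝓝[>] 0) (𝓝 ((wp * sp ^ 2 + wm * sm ^ 2) * (C / 2))) := by
  have hscale (c : ℝ) : (c * ·) =O[𝓝[>] (0 : ℝ)] fun ε => ε :=
    (isBigO_refl _ _).const_mul_left c
  have hRp := (hf_plus.comp_pow_of_isBigO (tendsto_mul_left_nhdsGT_zero hsp)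
    (hscale sp)).tendsto_div_nhds_zero
  have hRm := (hf_minus.comp_pow_of_isBigO (tendsto_neg_mul_left_nhdsGT_zero hsm)
    (hscale sm).neg_left).tendsto_div_nhds_zero
  have hlim := ((hRp.const_mul wp).add (hRm.const_mul wm)).add_const
    ((wp * sp ^ 2 + wm * sm ^ 2) * (C / 2))
  rw [mul_zero, mul_zero, add_zero, zero_add] at hlim
  refine hlim.congr' ?_
  filter_upwards [self_mem_nhdsWithin] with ε (hε : 0 < ε)
  field_simp
  linear_combination (-2 * ε) * hmatch

theorem generator_limit_at_mode_hop_general (p ℓ₀ r₁ r₂ : ℝ)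
    (αp αm sp sm : ℝ)
    (hαp : αp = 2 * stdNormCDF (-ℓ₀ / (2 * Real.sqrt r₁)))
    (hαm : αm = 2 * stdNormCDF (-ℓ₀ / (2 * Real.sqrt r₂)))
    (hsp : sp = αp ^ (-(1 : ℝ) / 2)) (hsm : sm = αm ^ (-(1 : ℝ) / 2))
    (f : ℝ → ℝ) (Ap Am C : ℝ)
    (hf_plus : (fun x => f x - (f 0 + Ap * x + C / 2 * x ^ 2))
      =o[nhdsWithin 0 (Set.Ioi 0)] fun x => x ^ 2)
    (hf_minus : (fun x => f x - (f 0 + Am * x + C / 2 * x ^ 2))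
      =o[nhdsWithin 0 (Set.Iio 0)] fun x => x ^ 2)
    (hskew : p * αp ^ ((1 : ℝ) / 2) * Ap = (1 - p) * αm ^ ((1 : ℝ) / 2) * Am) :
    Tendsto (fun d : ℕ =>
        (d : ℝ) * (p * αp * (f (sp * (d : ℝ) ^ (-(1 : ℝ) / 2)) - f 0) +
          (1 - p) * αm * (f (-(sm * (d : ℝ) ^ (-(1 : ℝ) / 2))) - f 0)))
      atTop (nhds (C / 2)) := by
  have hαp_pos : 0 < αp := by rw [hαp]; exact mul_pos two_pos (stdNormCDF_pos _)
  have hαm_pos : 0 < αm := by rw [hαm]; exact mul_pos two_pos (stdNormCDF_pos _)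
  have hmatch : p * αp * sp * Ap = (1 - p) * αm * sm * Am := by
    rwa [hsp, hsm, mul_assoc p, mul_assoc (1 - p), Real.mul_rpow_neg_half hαp_pos,
      Real.mul_rpow_neg_half hαm_pos]
  have hweights : p * αp * sp ^ 2 + (1 - p) * αm * sm ^ 2 = 1 := by
    rw [hsp, hsm, mul_assoc p, mul_assoc (1 - p), Real.mul_rpow_neg_half_sq hαp_pos,
      Real.mul_rpow_neg_half_sq hαm_pos]
    ring
  have hlim := tendsto_inv_sq_mul_two_sided_increments (hsp ▸ Real.rpow_pos_of_pos hαp_pos _)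
    (hsm ▸ Real.rpow_pos_of_pos hαm_pos _) hf_plus hf_minus hmatch
  rw [hweights, one_mul] at hlim
  refine (hlim.comp tendsto_natCast_rpow_neg_half_nhdsGT_zero).congr fun d => ?_
  rw [Function.comp_apply, Real.inv_sq_rpow_neg_half d.cast_nonneg]

/-- Appendix Lemma: convergence of the generator at the mode-hopping point:
with `α₊ = 2Φ(-ℓ₀/(2√r₁))`, `α₋ = 2Φ(-ℓ₀/(2√r₂))`, `s₊ = α₊^{-1/2}`, `s₋ = α₋^{-1/2}`, if `f`
has one-sided second-order expansions at `0` with one-sided first derivatives `A₊, A₋`,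
common one-sided second derivative `C`, and the skew matching condition
`p α₊^{1/2} A₊ = (1-p) α₋^{1/2} A₋` holds, then
`lim_{d→∞} d [p α₊ (f(s₊ d^{-1/2}) - f(0)) + (1-p) α₋ (f(-s₋ d^{-1/2}) - f(0))] = C/2`. -/
theorem generator_limit_at_mode_hop (p ℓ₀ r₁ r₂ : ℝ)
    (hp0 : 0 ≤ p) (hp1 : p ≤ 1) (hℓ₀ : 0 < ℓ₀) (hr₁ : 0 < r₁) (hr₂ : 0 < r₂)
    (αp αm sp sm : ℝ)
    (hαp : αp = 2 * stdNormCDF (-ℓ₀ / (2 * Real.sqrt r₁)))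
    (hαm : αm = 2 * stdNormCDF (-ℓ₀ / (2 * Real.sqrt r₂)))
    (hsp : sp = αp ^ (-(1 : ℝ) / 2)) (hsm : sm = αm ^ (-(1 : ℝ) / 2))
    (f : ℝ → ℝ) (Ap Am C : ℝ)
    (hf_plus : (fun x => f x - (f 0 + Ap * x + C / 2 * x ^ 2))
      =o[nhdsWithin 0 (Set.Ioi 0)] fun x => x ^ 2)
    (hf_minus : (fun x => f x - (f 0 + Am * x + C / 2 * x ^ 2))
      =o[nhdsWithin 0 (Set.Iio 0)] fun x => x ^ 2)
    (hskew : p * αp ^ ((1 : ℝ) / 2) * Ap = (1 - p) * αm ^ ((1 : ℝ) / 2) * Am) :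
    Tendsto (fun d : ℕ =>
        (d : ℝ) * (p * αp * (f (sp * (d : ℝ) ^ (-(1 : ℝ) / 2)) - f 0) +
          (1 - p) * αm * (f (-(sm * (d : ℝ) ^ (-(1 : ℝ) / 2))) - f 0)))
      atTop (nhds (C / 2)) :=
  generator_limit_at_mode_hop_general p ℓ₀ r₁ r₂ αp αm sp sm hαp hαm hsp hsm f Ap Am C hf_plus
    hf_minus hskew
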